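/- In the ring of formal power series ℚ[[z]], the generating function E(z) = Σ_{n≥1} e_n·z^n satisfies the Riccati-type differential equation (1−z)²·z·E′(z) = (1−z)²·E(z)² + (1−z²)·E(z) + z², where E′ denotes the formal derivative. -/

import Mathlib

/-- Plane binary trees: a leaf, or an ordered pair of plane binary trees. -/
inductive PTree : Type where
  | leaf : PTree
  | node : PTree → PTree → PTree
deriving DecidableEq

namespace PTree

/-- Number of leaves of a plane binary tree. -/
def leaves : PTree → ℕ
  | leaf => 1
  | node l r => leaves l + leaves r

/-- Number of root ancestral configurations:
`c(leaf) = 0`, `c(node l r) = (c l + 1) * (c r + 1)`. -/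
def c : PTree → ℕ
  | leaf => 0
  | node l r => (c l + 1) * (c r + 1)

/-- The finite set of plane binary trees with `n` leaves. -/
def trees : ℕ → Finset PTree
  | 0 => ∅
  | 1 => {leaf}
  | (n+2) =>
      (Finset.Icc 1 (n+1)).attach.biUnion fun j =>
        ((trees j.1) ×ˢ (trees (n+2-j.1))).image fun p => node p.1 p.2
decreasing_by
  · have h := Finset.mem_Icc.mp j.2; omega
  · have h := Finset.mem_Icc.mp j.2; omega

end PTree

namespace PTree

/-- Yule–Harding weight: `w(leaf) = 1`,
`w(node l r) = w l * w r / (leaves l + leaves r - 1)`. -/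
def w : PTree → ℚ
  | leaf => 1
  | node l r => w l * w r / ((leaves l + leaves r - 1 : ℕ) : ℚ)

end PTree

namespace PTree

/-- Yule–Harding mean number of root configurations (`e 0 = 0` since `trees 0 = ∅`). -/
def e (n : ℕ) : ℚ := ∑ t ∈ trees n, w t * (c t : ℚ)

end PTree

/-
Splitting a tree at its root, `(n - 1) · w (node l r) = w l · w r` for trees with `n` leaves and
`c + 1` is multiplicative, so `(n - 1) e_n` is the `n`-th coefficient of `F²`, where `F` is the
generating function of the Yule–Harding means of `c + 1`. That is, `z E' - E = F²`. Since the
Yule–Harding weights of the trees with `n ≥ 1` leaves sum to `1`, `F = E + z / (1 - z)`, and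
eliminating `F` gives the equation.
-/

open PowerSeries

open Finset hiding mk

namespace PowerSeries

variable {R : Type*}

theorem coeff_mk_mul_mk_add_two [Semiring R] {f g : ℕ → R} (hf : f 0 = 0) (hg : g 0 = 0)
    (n : ℕ) :
    coeff (n + 2) (mk f * mk g) = ∑ p ∈ antidiagonal n, f (p.1 + 1) * g (p.2 + 1) := by
  rw [coeff_mul, Nat.sum_antidiagonal_succ, Nat.sum_antidiagonal_succ']
  simp [hf, hg]

theorem X_mul_derivative_mk [CommSemiring R] (f : ℕ → R) :
    X * d⁄dX R (mk f) = mk fun n => n * f n := by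
  ext (_ | n)
  · simp
  · rw [coeff_succ_X_mul, coeff_derivative, coeff_mk, coeff_mk]
    push_cast
    ring

end PowerSeries

namespace PTree

theorem leaves_eq_of_mem_trees : ∀ {t : PTree} {n : ℕ}, t ∈ trees n → t.leaves = n
  | leaf, 0, h => by simp [trees] at h
  | leaf, 1, _ => rfl
  | leaf, n + 2, h => by simp [trees] at h
  | node l r, 0, h => by simp [trees] at h
  | node l r, 1, h => by simp [trees] at h
  | node l r, n + 2, h => by
    rw [trees] at h
    simp only [mem_biUnion, mem_image, mem_product, node.injEq] at h
    obtain ⟨j, -, ⟨l', r'⟩, ⟨hl, hr⟩, rfl, rfl⟩ := h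
    have := mem_Icc.mp j.2
    rw [leaves, leaves_eq_of_mem_trees hl, leaves_eq_of_mem_trees hr]
    omega

theorem sum_trees_add_two {M : Type*} [AddCommMonoid M] (n : ℕ) (g : PTree → M) :
    ∑ t ∈ trees (n + 2), g t =
      ∑ p ∈ antidiagonal n, ∑ l ∈ trees (p.1 + 1), ∑ r ∈ trees (p.2 + 1), g (node l r) := by
  rw [trees, sum_biUnion]
  · rw [sum_attach (Icc 1 (n + 1))
      fun j => ∑ t ∈ (trees j ×ˢ trees (n + 2 - j)).image fun p => node p.1 p.2, g t]
    have node_injective : Function.Injective fun p : PTree × PTree => node p.1 p.2 :=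
      fun p q h => Prod.ext (node.inj h).1 (node.inj h).2
    simp_rw [sum_image node_injective.injOn, sum_product]
    refine sum_nbij' (fun j => (j - 1, n + 1 - j)) (fun p => p.1 + 1) ?_ ?_ ?_ ?_ ?_
    all_goals
      intro a ha
      simp only [mem_Icc, HasAntidiagonal.mem_antidiagonal, Prod.ext_iff] at ha ⊢
    · omega
    · omega
    · omega
    · omega
    · rw [show a - 1 + 1 = a by omega, show n + 1 - a + 1 = n + 2 - a by omega]
  · intro a _ b _ hab
    refine disjoint_left.mpr fun t hta htb => hab (Subtype.ext ?_)
    simp only [mem_image, mem_product] at hta htb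
    obtain ⟨⟨l, r⟩, ⟨hl, -⟩, rfl⟩ := hta
    obtain ⟨⟨l', r'⟩, ⟨hl', -⟩, h⟩ := htb
    rw [← leaves_eq_of_mem_trees hl, ← leaves_eq_of_mem_trees hl', (node.inj h).1]

theorem w_node_of_leaves_add {l r : PTree} {n : ℕ} (h : l.leaves + r.leaves = n + 2) :
    w (node l r) = w l * w r / (n + 1) := by
  rw [w, h]
  push_cast
  ring

/-- The mean of `g` over the `n`-leaf trees under the Yule–Harding distribution `w`. -/
def yhMean (g : PTree → ℚ) (n : ℕ) : ℚ := ∑ t ∈ trees n, w t * g t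

theorem yhMean_zero (g : PTree → ℚ) : yhMean g 0 = 0 := by
  simp [yhMean, trees]

theorem yhMean_add (g h : PTree → ℚ) (n : ℕ) :
    yhMean (fun t => g t + h t) n = yhMean g n + yhMean h n := by
  simp only [yhMean, mul_add, sum_add_distrib]

theorem mul_yhMean_add_two {g a b : PTree → ℚ} (hg : ∀ l r, g (node l r) = a l * b r) (n : ℕ) :
    (n + 1 : ℚ) * yhMean g (n + 2) =
      ∑ p ∈ antidiagonal n, yhMean a (p.1 + 1) * yhMean b (p.2 + 1) := by
  rw [yhMean, sum_trees_add_two, mul_sum]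
  refine sum_congr rfl fun p hp => ?_
  rw [yhMean, yhMean, sum_mul_sum, mul_sum]
  refine sum_congr rfl fun l hl => ?_
  rw [mul_sum]
  refine sum_congr rfl fun r hr => ?_
  have hleaves : l.leaves + r.leaves = n + 2 := by
    rw [leaves_eq_of_mem_trees hl, leaves_eq_of_mem_trees hr, ← mem_antidiagonal.mp hp]
    ring
  rw [w_node_of_leaves_add hleaves, hg]
  field_simp

theorem yhMean_one_add_one (n : ℕ) : yhMean 1 (n + 1) = 1 := by
  induction n using Nat.strong_induction_on with
  | _ n ih =>
    rcases n with _ | m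
    · simp [yhMean, trees, w]
    · have h := mul_yhMean_add_two (g := 1) (a := 1) (b := 1) (fun _ _ => (mul_one 1).symm) m
      have hsum : ∑ p ∈ antidiagonal m, yhMean 1 (p.1 + 1) * yhMean 1 (p.2 + 1) = m + 1 := by
        rw [sum_congr rfl fun p hp => by
          have := mem_antidiagonal.mp hp
          rw [ih p.1 (by omega), ih p.2 (by omega), one_mul]]
        simp
      rw [hsum] at h
      exact (mul_eq_left₀ (by positivity)).mp h

theorem e_eq_yhMean : e = yhMean fun t => c t := rfl

theorem mk_yhMean_one : mk (yhMean 1) = X * mk 1 := by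
  ext (_ | n)
  · simp [yhMean_zero]
  · simp [coeff_succ_X_mul, yhMean_one_add_one]

theorem X_mul_derivative_sub_eq_sq :
    X * d⁄dX ℚ (mk e) - mk e = (mk (yhMean fun t => c t + 1)) ^ 2 := by
  have hc : ∀ l r, ((node l r).c : ℚ) = (l.c + 1) * (r.c + 1) := by simp [c]
  rw [X_mul_derivative_mk, sq]
  ext (_ | _ | n)
  · simp [e_eq_yhMean, yhMean_zero]
  · simp [coeff_mul, Nat.antidiagonal_succ, yhMean_zero]
  · rw [coeff_mk_mul_mk_add_two (yhMean_zero _) (yhMean_zero _),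
      ← mul_yhMean_add_two (g := fun t => c t) hc, map_sub, coeff_mk, coeff_mk, e_eq_yhMean]
    push_cast
    ring

theorem one_sub_X_mul_mk_yhMean_c_add_one :
    (1 - X) * mk (yhMean fun t => c t + 1) = (1 - X) * mk e + X := by
  have hsplit : mk (yhMean fun t => c t + 1) = mk e + mk (yhMean 1) := by
    ext n
    simp only [coeff_mk, map_add]
    exact yhMean_add (fun t => c t) 1 n
  rw [hsplit, mk_yhMean_one]
  linear_combination X * mk_one_mul_one_sub_eq_one ℚ

end PTree

/-- In `ℚ[[z]]`, the generating function `E(z) = Σ_{n≥1} e_n z^n` satisfies the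
Riccati-type equation `(1−z)²·z·E′(z) = (1−z)²·E(z)² + (1−z²)·E(z) + z²`. -/
theorem E_riccati :
    (1 - (X : ℚ⟦X⟧)) ^ 2 * X * d⁄dX ℚ (PowerSeries.mk PTree.e) =
      (1 - (X : ℚ⟦X⟧)) ^ 2 * (PowerSeries.mk PTree.e) ^ 2
        + (1 - (X : ℚ⟦X⟧) ^ 2) * PowerSeries.mk PTree.e + (X : ℚ⟦X⟧) ^ 2 := by
  have hsq := PTree.X_mul_derivative_sub_eq_sq
  have hlin := PTree.one_sub_X_mul_mk_yhMean_c_add_one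
  linear_combination (1 - X) ^ 2 * hsq
    + ((1 - X) * mk (PTree.yhMean fun t => PTree.c t + 1) + (1 - X) * mk PTree.e + X) * hlin
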